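/- Let θ be an abelian group and α : θ → ℤ/2ℤ a surjective group homomorphism, and suppose there is no element u ∈ θ with 2u = 0 and α(u) = 1. Then there exists a group homomorphism f : ker α → ℤ/2ℤ that does not extend to θ; that is, there is no group homomorphism g : θ → ℤ/2ℤ with g(v) = f(v) for all v ∈ ker α. -/

import Mathlib

/-!
Pick t with α t = 1. Then 2t lies in ker α but is not twice an element k of ker α, since
otherwise t - k would be an element of order dividing 2 with α = 1. Hence 2t is nonzero in the
𝔽₂-vector space ker α / 2 ker α, so some character f of ker α is nonzero on 2t; but every
g : θ → ℤ/2 kills 2t, so no g extends f.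
-/

theorem exists_addMonoidHom_zmod_apply_ne_zero {G : Type*} [AddCommGroup G] {p : ℕ}
    [Fact p.Prime] {a : G} (ha : ∀ b : G, p • b ≠ a) : ∃ f : G →+ ZMod p, f a ≠ 0 := by
  have hmk : ModN.mkQ p a ≠ 0 := by
    intro hzero
    obtain ⟨b, hb⟩ := (Submodule.Quotient.mk_eq_zero _).mp hzero
    exact ha b (by simpa using hb)
  obtain ⟨φ, hφ⟩ := Module.Projective.exists_dual_ne_zero (ZMod p) hmk
  exact ⟨φ.toAddMonoidHom.comp (ModN.mkQ p), hφ⟩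

theorem AddMonoidHom.map_char_nsmul_eq_zero {G : Type*} [AddCommGroup G] {n : ℕ}
    (g : G →+ ZMod n) (x : G) : g (n • x) = 0 := by
  rw [map_nsmul, ZModModule.char_nsmul_eq_zero]

/-- If θ has no element u with 2u = 0 and α(u) = 1, then there is a group
homomorphism f : ker α → ℤ/2ℤ which does not extend to θ. -/
theorem exists_nonextending_hom
    {θ : Type*} [AddCommGroup θ] (α : θ →+ ZMod 2)
    (hα : Function.Surjective α)
    (hno : ¬ ∃ u : θ, 2 • u = 0 ∧ α u = 1) :
    ∃ f : α.ker →+ ZMod 2,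
      ¬ ∃ g : θ →+ ZMod 2, ∀ v : α.ker, g (v : θ) = f v := by
  obtain ⟨t, ht⟩ := hα 1
  have h2t : 2 • t ∈ α.ker := by
    rw [AddMonoidHom.mem_ker, map_nsmul, ht]
    rfl
  have hnot_double : ∀ k : α.ker, 2 • k ≠ ⟨2 • t, h2t⟩ := by
    intro k hk
    refine hno ⟨t - k, ?_, ?_⟩
    · rw [smul_sub, sub_eq_zero]
      exact (congrArg Subtype.val hk).symm
    · rw [map_sub, ht, k.2, sub_zero]
  obtain ⟨f, hf⟩ := exists_addMonoidHom_zmod_apply_ne_zero hnot_double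
  refine ⟨f, fun ⟨g, hg⟩ => hf ?_⟩
  rw [← hg]
  exact g.map_char_nsmul_eq_zero t
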